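/- For any fixed nonzero integer A and any integer N, the number of integer quadruples (x,y,z,w) with |x|,|y|,|z|,|w| ≤ P, x(xy+z²) ≠ 0, and x(xy+z²) + A·w³ = N is O(P^{11/6+ε}). -/

import Mathlib

/-!
Write `M = N - A w³ = x (x y + z²)`. For fixed `x ≠ 0` and `w` a solution is determined by `z`,
and `z² ≡ M / x (mod |x|)`. Two roots `z, z₀` of `z² ≡ c (mod q)` satisfy `z ≡ ±z₀` modulo some
divisor `d ≥ √q` of `q`, so an interval of length `L` holds `O(τ(q) (L / √q + 1))` roots.

If `|x| ≤ P^{1/3}`, then moreover `|z² - M / x| = |x y| ≤ |x| P`, which confines `z` to two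
intervals of length `O(√(|x| P))`: this gives `O(P^{1/2+ε})` values of `z` for each of the
`O(P^{4/3})` pairs `(x, w)`. If `|x| > P^{1/3}`, then `x` divides `M ≠ 0` with `|M| ≤ 2 P³`, so each
`w` allows `O(P^ε)` values of `x`, and each pair `(x, w)` allows `O(P^{1+ε} / √|x|) = O(P^{5/6+ε})`
values of `z`. Both cases give `O(P^{11/6+ε})` by the divisor bound `τ(n) = O(n^ε)`.
-/

open Finset

theorem add_one_le_mul_one_add_pow {δ : ℝ} (hδ : 0 < δ) (k : ℕ) :
    (k + 1 : ℝ) ≤ max 1 δ⁻¹ * (1 + δ) ^ k := by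
  calc (k + 1 : ℝ) ≤ max 1 δ⁻¹ * (1 + k * δ) := by
        rcases le_total 1 δ with h | h
        · calc (k + 1 : ℝ) ≤ 1 + k * δ := by nlinarith
            _ ≤ _ := le_mul_of_one_le_left (by positivity) (le_max_left _ _)
        · have : 1 ≤ δ⁻¹ := one_le_inv₀ hδ |>.mpr h
          have hδk : δ⁻¹ * (1 + k * δ) = δ⁻¹ + k := by field_simp
          nlinarith [le_max_right 1 δ⁻¹]
    _ ≤ max 1 δ⁻¹ * (1 + δ) ^ k := by
        gcongr
        exact one_add_mul_le_pow (by linarith) k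

theorem add_one_le_mul_pow_rpow {ε : ℝ} (hε : 0 < ε) {x : ℝ} (hx : 2 ≤ x) (k : ℕ) :
    (k + 1 : ℝ) ≤ max 1 ((2 : ℝ) ^ ε - 1)⁻¹ * (x ^ k) ^ ε := by
  have h2 : 0 < (2 : ℝ) ^ ε - 1 := by linarith [Real.one_lt_rpow one_lt_two hε]
  calc (k + 1 : ℝ) ≤ max 1 ((2 : ℝ) ^ ε - 1)⁻¹ * (1 + ((2 : ℝ) ^ ε - 1)) ^ k :=
        add_one_le_mul_one_add_pow h2 k
    _ ≤ max 1 ((2 : ℝ) ^ ε - 1)⁻¹ * (x ^ k) ^ ε := by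
        rw [add_sub_cancel, ← Real.rpow_pow_comm (by linarith)]
        gcongr

theorem add_one_le_pow_rpow {ε x : ℝ} (hx : 0 ≤ x) (h2 : 2 ≤ x ^ ε) (k : ℕ) :
    (k + 1 : ℝ) ≤ (x ^ k) ^ ε := by
  calc (k + 1 : ℝ) ≤ 2 ^ k := by exact_mod_cast Nat.lt_two_pow_self
    _ ≤ (x ^ k) ^ ε := by rw [← Real.rpow_pow_comm hx]; gcongr

theorem Nat.exists_card_divisors_le_mul_rpow {ε : ℝ} (hε : 0 < ε) :
    ∃ C : ℝ, 0 < C ∧ ∀ n : ℕ, (#n.divisors : ℝ) ≤ C * (n : ℝ) ^ ε := by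
  set C₀ : ℝ := max 1 ((2 : ℝ) ^ ε - 1)⁻¹
  set B : ℕ := ⌈(2 : ℝ) ^ ε⁻¹⌉₊
  have hC₀ : 1 ≤ C₀ := le_max_left _ _
  have hlarge {p : ℕ} (hp : B < p) : (2 : ℝ) ≤ (p : ℝ) ^ ε := by
    calc (2 : ℝ) = ((2 : ℝ) ^ ε⁻¹) ^ ε := (Real.rpow_inv_rpow zero_le_two hε.ne').symm
      _ ≤ (p : ℝ) ^ ε := by
        gcongr
        exact (Nat.le_ceil _).trans (by exact_mod_cast hp.le)
  refine ⟨C₀ ^ B, by positivity, fun n => ?_⟩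
  rcases eq_or_ne n 0 with rfl | hn
  · simp [Real.zero_rpow hε.ne']
  have hfew : #{p ∈ n.primeFactors | p ≤ B} ≤ B := by
    calc #{p ∈ n.primeFactors | p ≤ B} ≤ #(Ioc 0 B) :=
          card_le_card fun p hp => by
            simp only [mem_filter, mem_Ioc] at hp ⊢
            exact ⟨Nat.pos_of_mem_primeFactors hp.1, hp.2⟩
      _ = B := by simp
  -- only the primes `p ≤ B` can have `k + 1 > p^{kε}`
  calc (#n.divisors : ℝ) = ∏ p ∈ n.primeFactors, ((n.factorization p : ℝ) + 1) := by
        rw [Nat.card_divisors hn]; push_cast; rfl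
    _ ≤ ∏ p ∈ n.primeFactors,
          (if p ≤ B then C₀ else 1) * ((p : ℝ) ^ n.factorization p) ^ ε := by
        refine prod_le_prod (fun _ _ => by positivity) fun p hp => ?_
        split_ifs with h
        · exact add_one_le_mul_pow_rpow hε
            (by exact_mod_cast (Nat.prime_of_mem_primeFactors hp).two_le) _
        · rw [one_mul]; exact add_one_le_pow_rpow p.cast_nonneg (hlarge (not_le.mp h)) _
    _ = C₀ ^ #{p ∈ n.primeFactors | p ≤ B} * (n : ℝ) ^ ε := by
        rw [prod_mul_distrib, ← prod_filter, prod_const, Real.finsetProd_rpow _ _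
          (fun _ _ => by positivity)]
        congr
        exact_mod_cast Nat.prod_factorization_pow_eq_self hn
    _ ≤ C₀ ^ B * (n : ℝ) ^ ε := by gcongr

theorem one_le_of_card_divisors_le {C ε : ℝ}
    (hτ : ∀ n : ℕ, (#n.divisors : ℝ) ≤ C * (n : ℝ) ^ ε) : 1 ≤ C := by
  simpa using hτ 1

theorem card_divisors_le_of_le {C ε : ℝ} (hε : 0 ≤ ε)
    (hτ : ∀ n : ℕ, (#n.divisors : ℝ) ≤ C * (n : ℝ) ^ ε) {n : ℕ} {X : ℝ} (hn : n ≤ X) :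
    (#n.divisors : ℝ) ≤ C * X ^ ε := by
  have hC : 0 ≤ C := zero_le_one.trans (one_le_of_card_divisors_le hτ)
  calc (#n.divisors : ℝ) ≤ C * (n : ℝ) ^ ε := hτ n
    _ ≤ C * X ^ ε := by gcongr

theorem Int.card_filter_Icc_modEq_le {d : ℕ} (hd : 0 < d) (r : ℤ) {a b : ℤ} (hab : a ≤ b) :
    (#{z ∈ Icc a b | z ≡ r [ZMOD d]} : ℝ) ≤ (b - a) / d + 2 := by
  have hd' : (0 : ℚ) < d := by exact_mod_cast hd
  have hIcc : Icc a b = Ioc (a - 1) b := by ext; simp only [mem_Icc, mem_Ioc]; omega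
  have hcount := Int.Ioc_filter_modEq_card (a - 1) b (r := d) (by exact_mod_cast hd) r
  rw [← hIcc] at hcount
  have hq : (#{z ∈ Icc a b | z ≡ r [ZMOD d]} : ℚ) ≤ (b - a) / d + 2 := by
    rw [show (#{z ∈ Icc a b | z ≡ r [ZMOD d]} : ℚ) = ((#{z ∈ Icc a b | z ≡ r [ZMOD d]} : ℤ) : ℚ)
      by norm_cast, hcount]
    push_cast
    have h1 := Int.floor_le ((b - r : ℚ) / d)
    have h2 := Int.lt_floor_add_one ((a - 1 - r : ℚ) / d)
    have h3 : (1 : ℚ) / d ≤ 1 := (div_le_one hd').mpr (by exact_mod_cast hd)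
    have h4 : (0 : ℚ) ≤ (b - a) / d := div_nonneg (by exact_mod_cast sub_nonneg.mpr hab) hd'.le
    have h5 : ((b - r : ℚ) / d) - ((a - 1 - r) / d - 1) = (b - a) / d + 1 / d + 1 := by
      field_simp; ring
    exact max_le (by linarith) (by linarith)
  exact_mod_cast hq

theorem Nat.exists_mem_divisors_le_mul_self_of_dvd_mul {q : ℕ} (hq : q ≠ 0) {u v : ℤ}
    (h : (q : ℤ) ∣ u * v) : ∃ d ∈ q.divisors, q ≤ d * d ∧ ((d : ℤ) ∣ u ∨ (d : ℤ) ∣ v) := by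
  obtain ⟨d₁, d₂, h₁, h₂, hq'⟩ := dvd_mul.mp h
  have hq'' : q = d₁.natAbs * d₂.natAbs := by
    rw [← Int.natAbs_mul, ← hq', Int.natAbs_natCast]
  rcases le_total d₁.natAbs d₂.natAbs with h | h
  · exact ⟨d₂.natAbs, Nat.mem_divisors.mpr ⟨Dvd.intro_left _ hq''.symm, hq⟩,
      hq'' ▸ Nat.mul_le_mul_right _ h, Or.inr (Int.natAbs_dvd.mpr h₂)⟩
  · exact ⟨d₁.natAbs, Nat.mem_divisors.mpr ⟨Dvd.intro _ hq''.symm, hq⟩,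
      hq'' ▸ Nat.mul_le_mul_left _ h, Or.inl (Int.natAbs_dvd.mpr h₁)⟩

theorem Int.exists_mem_divisors_modEq_of_sq_modEq_sq {q : ℕ} (hq : q ≠ 0) {z z₀ : ℤ}
    (h : z₀ ^ 2 ≡ z ^ 2 [ZMOD q]) :
    ∃ d ∈ q.divisors, q ≤ d * d ∧ (z ≡ z₀ [ZMOD d] ∨ z ≡ -z₀ [ZMOD d]) := by
  have hdvd : (q : ℤ) ∣ (z - z₀) * (z - -z₀) := by
    rw [sub_neg_eq_add, mul_comm, ← sq_sub_sq]; exact h.dvd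
  obtain ⟨d, hd, hqd, hd'⟩ := Nat.exists_mem_divisors_le_mul_self_of_dvd_mul hq hdvd
  exact ⟨d, hd, hqd, hd'.imp (fun h => (Int.modEq_iff_dvd.mpr h).symm)
    fun h => (Int.modEq_iff_dvd.mpr h).symm⟩

theorem card_filter_Icc_sq_modEq_le {q : ℕ} (hq : 0 < q) (c : ℤ) {a b : ℤ} (hab : a ≤ b) :
    (#{z ∈ Icc a b | z ^ 2 ≡ c [ZMOD q]} : ℝ) ≤ 2 * #q.divisors * ((b - a) / √q + 2) := by
  set S := {z ∈ Icc a b | z ^ 2 ≡ c [ZMOD q]}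
  have hab' : (0 : ℝ) ≤ b - a := by rw [sub_nonneg]; exact_mod_cast hab
  obtain hS | ⟨z₀, hz₀⟩ := S.eq_empty_or_nonempty
  · rw [hS, card_empty, Nat.cast_zero]; positivity
  set D := {d ∈ q.divisors | q ≤ d * d}
  have hcover : S ⊆ D.biUnion fun d =>
      {z ∈ Icc a b | z ≡ z₀ [ZMOD d]} ∪ {z ∈ Icc a b | z ≡ -z₀ [ZMOD d]} := by
    intro z hz
    rw [mem_filter] at hz hz₀
    obtain ⟨d, hd, hqd, hd'⟩ :=
      Int.exists_mem_divisors_modEq_of_sq_modEq_sq hq.ne' (hz₀.2.trans hz.2.symm)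
    refine mem_biUnion.mpr ⟨d, mem_filter.mpr ⟨hd, hqd⟩, ?_⟩
    rw [mem_union, mem_filter, mem_filter]
    exact hd'.imp (⟨hz.1, ·⟩) (⟨hz.1, ·⟩)
  have hfiber : ∀ d ∈ D, (#({z ∈ Icc a b | z ≡ z₀ [ZMOD d]} ∪
      {z ∈ Icc a b | z ≡ -z₀ [ZMOD d]}) : ℝ) ≤ 2 * ((b - a) / √q + 2) := by
    intro d hd
    obtain ⟨hd, hqd⟩ := mem_filter.mp hd
    have hd0 : 0 < d := Nat.pos_of_mem_divisors hd
    have hsqrt : √q ≤ d := by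
      rw [← Real.sqrt_mul_self d.cast_nonneg]
      exact Real.sqrt_le_sqrt (by exact_mod_cast hqd)
    have hlen : ((b : ℝ) - a) / d + 2 ≤ (b - a) / √q + 2 := by
      gcongr
    calc _ ≤ (#{z ∈ Icc a b | z ≡ z₀ [ZMOD d]} : ℝ) + #{z ∈ Icc a b | z ≡ -z₀ [ZMOD d]} := by
          exact_mod_cast card_union_le _ _
      _ ≤ 2 * ((b - a) / √q + 2) := by
          linarith [Int.card_filter_Icc_modEq_le hd0 z₀ hab,
            Int.card_filter_Icc_modEq_le hd0 (-z₀) hab]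
  calc (#S : ℝ) ≤ ∑ d ∈ D, (#({z ∈ Icc a b | z ≡ z₀ [ZMOD d]} ∪
        {z ∈ Icc a b | z ≡ -z₀ [ZMOD d]}) : ℝ) := by
        exact_mod_cast (card_le_card hcover).trans card_biUnion_le
    _ ≤ #D * (2 * ((b - a) / √q + 2)) := by
        rw [← nsmul_eq_mul]; exact sum_le_card_nsmul _ _ _ hfiber
    _ ≤ #q.divisors * (2 * ((b - a) / √q + 2)) := by
        gcongr; exact filter_subset _ _
    _ = 2 * #q.divisors * ((b - a) / √q + 2) := by ring

theorem card_filter_sq_modEq_of_abs_sub_le {q : ℕ} (hq : 0 < q) (c : ℤ) (L : ℕ) (s : Finset ℤ) :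
    (#{z ∈ s | z ^ 2 ≡ c [ZMOD q] ∧ |z ^ 2 - c| ≤ q * L} : ℝ) ≤
      4 * #q.divisors * (2 * √(2 * L) + 2) := by
  set Z := {z ∈ s | z ^ 2 ≡ c [ZMOD q] ∧ |z ^ 2 - c| ≤ q * L}
  obtain hZ | ⟨z₀, hz₀⟩ := Z.eq_empty_or_nonempty
  · rw [hZ, card_empty, Nat.cast_zero]; positivity
  set r := Nat.sqrt (2 * q * L)
  set near : ℤ → Finset ℤ := fun m => {z ∈ Icc (m - r) (m + r) | z ^ 2 ≡ c [ZMOD q]}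
  -- `|z - z₀| |z + z₀| = |z² - z₀²| ≤ 2qL`, so one of the two factors is at most `√(2qL)`
  have hcover : Z ⊆ near z₀ ∪ near (-z₀) := by
    intro z hz
    rw [mem_filter] at hz hz₀
    have hprod : |z - z₀| * |z - -z₀| ≤ 2 * q * L := by
      rw [← abs_mul, show (z - z₀) * (z - -z₀) = (z ^ 2 - c) - (z₀ ^ 2 - c) by ring]
      linarith [abs_sub (z ^ 2 - c) (z₀ ^ 2 - c), hz.2.2, hz₀.2.2]
    have hsqrt : (2 * q * L : ℤ) < (r + 1) ^ 2 := by exact_mod_cast Nat.lt_succ_sqrt' _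
    rw [mem_union, mem_filter, mem_filter, mem_Icc, mem_Icc]
    rcases le_or_gt |z - z₀| r with h | h
    · exact Or.inl ⟨by constructor <;> linarith [abs_sub_le_iff.mp h], hz.2.1⟩
    rcases le_or_gt |z - -z₀| r with h' | h'
    · exact Or.inr ⟨by constructor <;> linarith [abs_sub_le_iff.mp h'], hz.2.1⟩
    nlinarith
  have hr : (r : ℝ) ≤ √q * √(2 * L) := by
    rw [← Real.sqrt_mul q.cast_nonneg, ← mul_assoc, mul_comm (q : ℝ) 2]
    exact_mod_cast Real.nat_sqrt_le_real_sqrt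
  have hnear (m : ℤ) : (#(near m) : ℝ) ≤ 2 * #q.divisors * (2 * √(2 * L) + 2) := by
    refine (card_filter_Icc_sq_modEq_le hq c (by omega)).trans ?_
    have hq' : 0 < √q := Real.sqrt_pos.mpr (by exact_mod_cast hq)
    gcongr
    rw [div_le_iff₀ hq']
    push_cast
    linarith
  calc (#Z : ℝ) ≤ #(near z₀) + #(near (-z₀)) := by
        exact_mod_cast (card_le_card hcover).trans (card_union_le _ _)
    _ ≤ 4 * #q.divisors * (2 * √(2 * L) + 2) := by
        linarith [hnear z₀, hnear (-z₀)]

theorem Finset.cast_card_le_card_mul_of_maps_to {α β : Type*} [DecidableEq β] {s : Finset α}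
    {t : Finset β} {f : α → β} (hf : ∀ a ∈ s, f a ∈ t) {B : ℝ}
    (hB : ∀ b ∈ t, (#{a ∈ s | f a = b} : ℝ) ≤ B) : (#s : ℝ) ≤ #t * B := by
  rw [card_eq_sum_card_fiberwise hf, ← nsmul_eq_mul]
  push_cast
  exact sum_le_card_nsmul _ _ _ hB

theorem Int.card_Icc_neg_self_le {K : ℕ} {X : ℝ} (hK : K ≤ X) (hX : 1 ≤ X) :
    (#(Icc (-(K : ℤ)) K) : ℝ) ≤ 3 * X := by
  rw [Int.card_Icc, show (K + 1 - -(K : ℤ)).toNat = 2 * K + 1 by omega]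
  push_cast
  linarith

theorem Int.card_filter_dvd_le {M : ℤ} (hM : M ≠ 0) (s : Finset ℤ) :
    #{x ∈ s | x ∣ M} ≤ 2 * #M.natAbs.divisors := by
  refine card_le_mul_card_image_of_maps_to (f := Int.natAbs) (fun x hx => ?_) 2 fun d _ => ?_
  · exact Nat.mem_divisors.mpr
      ⟨Int.natAbs_dvd_natAbs.mpr (mem_filter.mp hx).2, Int.natAbs_ne_zero.mpr hM⟩
  · refine (card_le_card (t := {(d : ℤ), -(d : ℤ)}) fun x hx => ?_).trans card_le_two
    rw [mem_insert, mem_singleton]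
    exact Int.natAbs_eq_iff.mp (mem_filter.mp hx).2

theorem card_filter_product_dvd_le {C ε : ℝ} (hε : 0 ≤ ε)
    (hτ : ∀ n : ℕ, (#n.divisors : ℝ) ≤ C * (n : ℝ) ^ ε) (s : Finset ℤ) {W : Finset ℤ}
    {f : ℤ → ℤ} {X : ℕ} (hW : ∀ w ∈ W, f w ≠ 0 ∧ (f w).natAbs ≤ X) :
    (#{p ∈ s ×ˢ W | p.1 ∣ f p.2} : ℝ) ≤ #W * (2 * (C * X ^ ε)) := by
  refine cast_card_le_card_mul_of_maps_to (f := Prod.snd)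
    (fun p hp => (mem_product.mp (mem_filter.mp hp).1).2) fun w hw => ?_
  obtain ⟨hfw, hfwX⟩ := hW w hw
  have hinj : #{p ∈ {p ∈ s ×ˢ W | p.1 ∣ f p.2} | p.2 = w} ≤ #{x ∈ s | x ∣ f w} := by
    refine card_le_card_of_injOn Prod.fst (fun p hp => ?_) fun p hp p' hp' h => ?_
    · rw [mem_coe, mem_filter, mem_filter, mem_product] at hp
      exact mem_filter.mpr ⟨hp.1.1.1, hp.2 ▸ hp.1.2⟩
    · rw [mem_coe, mem_filter] at hp hp'
      exact Prod.ext h (hp.2.trans hp'.2.symm)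
  calc _ ≤ (#{x ∈ s | x ∣ f w} : ℝ) := by exact_mod_cast hinj
    _ ≤ 2 * #(f w).natAbs.divisors := by exact_mod_cast Int.card_filter_dvd_le hfw s
    _ ≤ 2 * (C * X ^ ε) := by
        gcongr; exact card_divisors_le_of_le hε hτ (by exact_mod_cast hfwX)

noncomputable def quadSolutions (A N : ℤ) (P : ℕ) : Finset (ℤ × ℤ × ℤ × ℤ) :=
  {t ∈ Icc (-(P : ℤ)) P ×ˢ Icc (-(P : ℤ)) P ×ˢ Icc (-(P : ℤ)) P ×ˢ Icc (-(P : ℤ)) P |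
    t.1 * (t.1 * t.2.1 + t.2.2.1 ^ 2) ≠ 0 ∧
      t.1 * (t.1 * t.2.1 + t.2.2.1 ^ 2) + A * t.2.2.2 ^ 3 = N}

section quadSolutions

variable {A N : ℤ} {P : ℕ} {C ε : ℝ}

theorem mem_quadSolutions {x y z w : ℤ} :
    (x, y, z, w) ∈ quadSolutions A N P ↔ (|x| ≤ P ∧ |y| ≤ P ∧ |z| ≤ P ∧ |w| ≤ P) ∧
      x * (x * y + z ^ 2) ≠ 0 ∧ x * (x * y + z ^ 2) + A * w ^ 3 = N := by
  simp only [quadSolutions, mem_filter, mem_product, mem_Icc, abs_le]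

theorem abs_mul_mul_add_sq_le {x y z : ℤ} (hx : |x| ≤ P) (hy : |y| ≤ P) (hz : |z| ≤ P) :
    |x * (x * y + z ^ 2)| ≤ 2 * P ^ 3 := by
  have hxy : |x * y| ≤ P * P := by rw [abs_mul]; exact mul_le_mul hx hy (abs_nonneg _) (by simp)
  have hz2 : |z ^ 2| ≤ P ^ 2 := by rw [abs_pow]; exact pow_le_pow_left₀ (abs_nonneg _) hz 2
  calc |x * (x * y + z ^ 2)| = |x| * |x * y + z ^ 2| := abs_mul _ _
    _ ≤ P * (P * P + P ^ 2) :=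
        mul_le_mul hx ((abs_add_le _ _).trans (add_le_add hxy hz2)) (abs_nonneg _) (by simp)
    _ = 2 * P ^ 3 := by ring

theorem dvd_sub_of_mem_quadSolutions {x y z w : ℤ} (h : (x, y, z, w) ∈ quadSolutions A N P) :
    x ∣ N - A * w ^ 3 ∧ N - A * w ^ 3 ≠ 0 ∧ (N - A * w ^ 3).natAbs ≤ 2 * P ^ 3 := by
  obtain ⟨⟨hx, hy, hz, -⟩, hne, heq⟩ := mem_quadSolutions.mp h
  have hM : N - A * w ^ 3 = x * (x * y + z ^ 2) := by rw [← heq]; ring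
  have hMP := abs_mul_mul_add_sq_le hx hy hz
  rw [← hM, ← Int.natCast_natAbs] at hMP
  exact ⟨hM ▸ dvd_mul_right _ _, hM ▸ hne, by exact_mod_cast hMP⟩

/-- The division `c = (N - A w³) / x` is exact on solutions, where `c = x y + z²`; so `z`
determines `y`, and `z² ≡ c (mod |x|)`. -/
theorem card_fiber_quadSolutions_le (x w : ℤ) :
    #{t ∈ quadSolutions A N P | (t.1, t.2.2.2) = (x, w)} ≤
      #{z ∈ Icc (-(P : ℤ)) P | z ^ 2 ≡ (N - A * w ^ 3) / x [ZMOD x.natAbs] ∧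
        |z ^ 2 - (N - A * w ^ 3) / x| ≤ x.natAbs * P} := by
  refine card_le_card_of_injOn (fun t => t.2.2.1) ?_ ?_
  · rintro ⟨x', y, z, w'⟩ ht
    obtain ⟨hsol, hxw⟩ := mem_filter.mp (mem_coe.mp ht)
    obtain ⟨rfl, rfl⟩ : x' = x ∧ w' = w := Prod.mk.inj hxw
    obtain ⟨⟨-, hy, hz, -⟩, hne, heq⟩ := mem_quadSolutions.mp hsol
    have hx : x' ≠ 0 := left_ne_zero_of_mul hne
    have hc : (N - A * w' ^ 3) / x' - z ^ 2 = x' * y := by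
      rw [← heq, add_sub_cancel_right, Int.mul_ediv_cancel_left _ hx]; ring
    refine mem_filter.mpr ⟨mem_Icc.mpr (abs_le.mp hz), ?_, ?_⟩
    · exact Int.modEq_iff_dvd.mpr (hc ▸ Int.natAbs_dvd.mpr (dvd_mul_right _ _))
    · rw [abs_sub_comm, hc, abs_mul, Int.natCast_natAbs]
      exact mul_le_mul_of_nonneg_left hy (abs_nonneg _)
  · rintro ⟨x₁, y₁, z₁, w₁⟩ h₁ ⟨x₂, y₂, z₂, w₂⟩ h₂ (rfl : z₁ = z₂)
    obtain ⟨hsol₁, hxw₁⟩ := mem_filter.mp (mem_coe.mp h₁)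
    obtain ⟨hsol₂, hxw₂⟩ := mem_filter.mp (mem_coe.mp h₂)
    obtain ⟨rfl, rfl⟩ : x₁ = x ∧ w₁ = w := Prod.mk.inj hxw₁
    obtain ⟨rfl, rfl⟩ : x₂ = x₁ ∧ w₂ = w₁ := Prod.mk.inj hxw₂
    obtain ⟨-, hne, heq₁⟩ := mem_quadSolutions.mp hsol₁
    obtain ⟨-, -, heq₂⟩ := mem_quadSolutions.mp hsol₂
    have hx : x₂ ≠ 0 := left_ne_zero_of_mul hne
    have : x₂ * (x₂ * y₁) = x₂ * (x₂ * y₂) := by linarith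
    rw [mul_left_cancel₀ hx (mul_left_cancel₀ hx this)]

theorem card_fiber_quadSolutions_le_of_natAbs_le (hε : 0 ≤ ε)
    (hτ : ∀ n : ℕ, (#n.divisors : ℝ) ≤ C * (n : ℝ) ^ ε) {x : ℤ} (hx : x ≠ 0) (hxP : x.natAbs ≤ P)
    (w : ℤ) :
    (#{t ∈ quadSolutions A N P | (t.1, t.2.2.2) = (x, w)} : ℝ) ≤ 20 * (C * P ^ ε) * √P := by
  have hx0 : 0 < x.natAbs := Int.natAbs_pos.mpr hx
  have hsqrt : 2 * √(2 * P) + 2 ≤ 5 * √P := by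
    have h2 : √2 ≤ 3 / 2 := Real.sqrt_le_iff.mpr ⟨by norm_num, by norm_num⟩
    have hP : 1 ≤ √P := Real.one_le_sqrt.mpr (Nat.one_le_cast.mpr (hx0.trans_le hxP))
    rw [Real.sqrt_mul zero_le_two]
    nlinarith
  calc _ ≤ (#{z ∈ Icc (-(P : ℤ)) P | z ^ 2 ≡ (N - A * w ^ 3) / x [ZMOD x.natAbs] ∧
          |z ^ 2 - (N - A * w ^ 3) / x| ≤ x.natAbs * P} : ℝ) := by
        exact_mod_cast card_fiber_quadSolutions_le x w
    _ ≤ 4 * #x.natAbs.divisors * (2 * √(2 * P) + 2) :=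
        card_filter_sq_modEq_of_abs_sub_le hx0 _ P _
    _ ≤ 4 * (C * P ^ ε) * (5 * √P) := by
        have hτx : (#x.natAbs.divisors : ℝ) ≤ C * P ^ ε :=
          card_divisors_le_of_le hε hτ (by exact_mod_cast hxP)
        have hC := one_le_of_card_divisors_le hτ
        gcongr
    _ = 20 * (C * P ^ ε) * √P := by ring

theorem card_fiber_quadSolutions_le_of_rpow_lt (hP : 1 ≤ P) (hε : 0 ≤ ε)
    (hτ : ∀ n : ℕ, (#n.divisors : ℝ) ≤ C * (n : ℝ) ^ ε) {x : ℤ}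
    (hx : (P : ℝ) ^ ((1 : ℝ) / 3) < x.natAbs) (hxP : x.natAbs ≤ P) (w : ℤ) :
    (#{t ∈ quadSolutions A N P | (t.1, t.2.2.2) = (x, w)} : ℝ) ≤
      8 * (C * P ^ ε) * (P : ℝ) ^ ((5 : ℝ) / 6) := by
  have hP' : (0 : ℝ) < P := by exact_mod_cast hP
  have hx0 : 0 < x.natAbs := by
    have : (0 : ℝ) < x.natAbs := lt_of_le_of_lt (by positivity) hx
    exact_mod_cast this
  have hsqrt : (P : ℝ) ^ ((1 : ℝ) / 6) ≤ √(x.natAbs : ℝ) := by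
    calc (P : ℝ) ^ ((1 : ℝ) / 6) = √((P : ℝ) ^ ((1 : ℝ) / 3)) := by
          rw [Real.sqrt_eq_rpow, ← Real.rpow_mul hP'.le]; norm_num
      _ ≤ √(x.natAbs : ℝ) := Real.sqrt_le_sqrt hx.le
  have hlen : 2 * P / √(x.natAbs : ℝ) ≤ 2 * (P : ℝ) ^ ((5 : ℝ) / 6) := by
    calc 2 * P / √(x.natAbs : ℝ) ≤ 2 * P / (P : ℝ) ^ ((1 : ℝ) / 6) := by gcongr
      _ = 2 * (P : ℝ) ^ ((5 : ℝ) / 6) := by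
          rw [show (5 : ℝ) / 6 = 1 - 1 / 6 by norm_num, Real.rpow_sub hP', Real.rpow_one,
            mul_div_assoc]
  have hτx : (#x.natAbs.divisors : ℝ) ≤ C * P ^ ε :=
    card_divisors_le_of_le hε hτ (by exact_mod_cast hxP)
  have hC : 0 ≤ C := zero_le_one.trans (one_le_of_card_divisors_le hτ)
  calc _ ≤ (#{z ∈ Icc (-(P : ℤ)) P | z ^ 2 ≡ (N - A * w ^ 3) / x [ZMOD x.natAbs] ∧
          |z ^ 2 - (N - A * w ^ 3) / x| ≤ x.natAbs * P} : ℝ) := by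
        exact_mod_cast card_fiber_quadSolutions_le x w
    _ ≤ (#{z ∈ Icc (-(P : ℤ)) P | z ^ 2 ≡ (N - A * w ^ 3) / x [ZMOD x.natAbs]} : ℝ) := by
        gcongr with z _
        exact fun h => h.1
    _ ≤ 2 * #x.natAbs.divisors * (((P : ℤ) - (-(P : ℤ)) : ℝ) / √(x.natAbs : ℝ) + 2) := by
        exact_mod_cast card_filter_Icc_sq_modEq_le hx0 _ (by omega)
    _ = 2 * #x.natAbs.divisors * (2 * P / √(x.natAbs : ℝ) + 2) := by push_cast; ring
    _ ≤ 2 * (C * P ^ ε) * (4 * (P : ℝ) ^ ((5 : ℝ) / 6)) := by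
        have h56 : 1 ≤ (P : ℝ) ^ ((5 : ℝ) / 6) :=
          Real.one_le_rpow (by exact_mod_cast hP) (by norm_num)
        refine mul_le_mul (by linarith) (by linarith) (by positivity) ?_
        exact mul_nonneg zero_le_two (mul_nonneg hC (by positivity))
    _ = 8 * (C * P ^ ε) * (P : ℝ) ^ ((5 : ℝ) / 6) := by ring

theorem card_quadSolutions_filter_natAbs_le (hP : 1 ≤ P) (hε : 0 ≤ ε)
    (hτ : ∀ n : ℕ, (#n.divisors : ℝ) ≤ C * (n : ℝ) ^ ε) :
    (#{t ∈ quadSolutions A N P | t.1.natAbs ≤ ⌊(P : ℝ) ^ ((1 : ℝ) / 3)⌋₊} : ℝ) ≤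
      180 * C * (P : ℝ) ^ ((11 : ℝ) / 6 + ε) := by
  set K := ⌊(P : ℝ) ^ ((1 : ℝ) / 3)⌋₊
  set T := (Icc (-(K : ℤ)) K).erase 0 ×ˢ Icc (-(P : ℤ)) P
  have hP' : (1 : ℝ) ≤ P := by exact_mod_cast hP
  have hK : (K : ℝ) ≤ (P : ℝ) ^ ((1 : ℝ) / 3) := Nat.floor_le (by positivity)
  have hKP : K ≤ P := by
    exact_mod_cast hK.trans (Real.rpow_le_self_of_one_le hP' (by norm_num))
  have hC := one_le_of_card_divisors_le hτ
  have hmaps : ∀ t ∈ {t ∈ quadSolutions A N P | t.1.natAbs ≤ K}, (t.1, t.2.2.2) ∈ T := by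
    rintro ⟨x, y, z, w⟩ ht
    obtain ⟨hsol, hxK⟩ := mem_filter.mp ht
    obtain ⟨⟨-, -, -, hw⟩, hne, -⟩ := mem_quadSolutions.mp hsol
    simp only [T, mem_product, mem_erase, mem_Icc]
    exact ⟨⟨left_ne_zero_of_mul hne, by omega, by omega⟩, abs_le.mp hw⟩
  have hfiber : ∀ p ∈ T, (#{t ∈ {t ∈ quadSolutions A N P | t.1.natAbs ≤ K} |
      (t.1, t.2.2.2) = p} : ℝ) ≤ 20 * (C * P ^ ε) * √P := by
    rintro ⟨x, w⟩ hp
    simp only [T, mem_product, mem_erase, mem_Icc] at hp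
    refine le_trans ?_ (card_fiber_quadSolutions_le_of_natAbs_le (A := A) (N := N) hε hτ hp.1.1
      (by omega) w)
    exact_mod_cast card_le_card (filter_subset_filter _ (filter_subset _ _))
  have hT : (#T : ℝ) ≤ 3 * (P : ℝ) ^ ((1 : ℝ) / 3) * (3 * P) := by
    rw [card_product, Nat.cast_mul]
    gcongr
    · exact (Nat.cast_le.mpr card_erase_le).trans
        (Int.card_Icc_neg_self_le hK (Real.one_le_rpow hP' (by norm_num)))
    · exact Int.card_Icc_neg_self_le le_rfl hP'
  calc _ ≤ #T * (20 * (C * P ^ ε) * √P) := cast_card_le_card_mul_of_maps_to hmaps hfiber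
    _ ≤ (3 * (P : ℝ) ^ ((1 : ℝ) / 3) * (3 * P)) * (20 * (C * P ^ ε) * √P) := by
        gcongr
    _ = 180 * C * (P : ℝ) ^ ((11 : ℝ) / 6 + ε) := by
        have hP0 : (0 : ℝ) < P := by positivity
        rw [show (11 : ℝ) / 6 + ε = 1 / 3 + 1 + 1 / 2 + ε by ring, Real.rpow_add hP0,
          Real.rpow_add hP0, Real.rpow_add hP0, Real.rpow_one, Real.sqrt_eq_rpow]
        ring

theorem card_filter_dvd_sub_mul_pow_le (hP : 1 ≤ P) (hε : 0 ≤ ε)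
    (hτ : ∀ n : ℕ, (#n.divisors : ℝ) ≤ C * (n : ℝ) ^ ε) :
    (#{p ∈ Icc (-(P : ℤ)) P ×ˢ {w ∈ Icc (-(P : ℤ)) P |
        N - A * w ^ 3 ≠ 0 ∧ (N - A * w ^ 3).natAbs ≤ 2 * P ^ 3} | p.1 ∣ N - A * p.2 ^ 3} : ℝ) ≤
      6 * 2 ^ ε * C * (P : ℝ) ^ (1 + 3 * ε) := by
  have hP' : (1 : ℝ) ≤ P := by exact_mod_cast hP
  have hC := one_le_of_card_divisors_le hτ
  calc _ ≤ #{w ∈ Icc (-(P : ℤ)) P | N - A * w ^ 3 ≠ 0 ∧ (N - A * w ^ 3).natAbs ≤ 2 * P ^ 3} *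
        (2 * (C * ((2 * P ^ 3 : ℕ) : ℝ) ^ ε)) :=
        card_filter_product_dvd_le (f := fun w => N - A * w ^ 3) hε hτ _
          fun w hw => (mem_filter.mp hw).2
    _ ≤ 3 * P * (2 * (C * ((2 * P ^ 3 : ℕ) : ℝ) ^ ε)) := by
        gcongr
        exact (Nat.cast_le.mpr (card_filter_le _ _)).trans (Int.card_Icc_neg_self_le le_rfl hP')
    _ = 6 * 2 ^ ε * C * (P : ℝ) ^ (1 + 3 * ε) := by
        push_cast
        rw [Real.mul_rpow zero_le_two (by positivity), ← Real.rpow_natCast_mul (by positivity),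
          Real.rpow_add (by positivity), Real.rpow_one]
        push_cast
        ring

theorem card_quadSolutions_filter_not_natAbs_le (hP : 1 ≤ P) (hε : 0 ≤ ε)
    (hτ : ∀ n : ℕ, (#n.divisors : ℝ) ≤ C * (n : ℝ) ^ ε) :
    (#{t ∈ quadSolutions A N P | ¬t.1.natAbs ≤ ⌊(P : ℝ) ^ ((1 : ℝ) / 3)⌋₊} : ℝ) ≤
      48 * 2 ^ ε * C ^ 2 * (P : ℝ) ^ ((11 : ℝ) / 6 + 4 * ε) := by
  set K := ⌊(P : ℝ) ^ ((1 : ℝ) / 3)⌋₊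
  set D := {p ∈ Icc (-(P : ℤ)) P ×ˢ {w ∈ Icc (-(P : ℤ)) P |
    N - A * w ^ 3 ≠ 0 ∧ (N - A * w ^ 3).natAbs ≤ 2 * P ^ 3} | p.1 ∣ N - A * p.2 ^ 3}
  set T := {p ∈ D | (P : ℝ) ^ ((1 : ℝ) / 3) < p.1.natAbs}
  have hC := one_le_of_card_divisors_le hτ
  have hmaps : ∀ t ∈ {t ∈ quadSolutions A N P | ¬t.1.natAbs ≤ K}, (t.1, t.2.2.2) ∈ T := by
    rintro ⟨x, y, z, w⟩ ht
    obtain ⟨hsol, hxK⟩ := mem_filter.mp ht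
    obtain ⟨hdvd, hM, hMP⟩ := dvd_sub_of_mem_quadSolutions hsol
    obtain ⟨⟨hx, -, -, hw⟩, -⟩ := mem_quadSolutions.mp hsol
    have hxK' : (P : ℝ) ^ ((1 : ℝ) / 3) < x.natAbs :=
      (Nat.lt_floor_add_one _).trans_le (by exact_mod_cast not_le.mp hxK)
    simp only [T, D, mem_filter, mem_product, mem_Icc]
    exact ⟨⟨⟨abs_le.mp hx, abs_le.mp hw, hM, hMP⟩, hdvd⟩, hxK'⟩
  have hfiber : ∀ p ∈ T, (#{t ∈ {t ∈ quadSolutions A N P | ¬t.1.natAbs ≤ K} |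
      (t.1, t.2.2.2) = p} : ℝ) ≤ 8 * (C * P ^ ε) * (P : ℝ) ^ ((5 : ℝ) / 6) := by
    rintro ⟨x, w⟩ hp
    simp only [T, D, mem_filter, mem_product, mem_Icc] at hp
    refine le_trans ?_ (card_fiber_quadSolutions_le_of_rpow_lt (A := A) (N := N) hP hε hτ
      hp.2 (by omega) w)
    exact_mod_cast card_le_card (filter_subset_filter _ (filter_subset _ _))
  calc _ ≤ #T * (8 * (C * P ^ ε) * (P : ℝ) ^ ((5 : ℝ) / 6)) :=
        cast_card_le_card_mul_of_maps_to hmaps hfiber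
    _ ≤ (6 * 2 ^ ε * C * (P : ℝ) ^ (1 + 3 * ε)) * (8 * (C * P ^ ε) * (P : ℝ) ^ ((5 : ℝ) / 6)) := by
        gcongr
        exact (Nat.cast_le.mpr (card_filter_le _ _)).trans (card_filter_dvd_sub_mul_pow_le hP hε hτ)
    _ = 48 * 2 ^ ε * C ^ 2 * (P : ℝ) ^ ((11 : ℝ) / 6 + 4 * ε) := by
        have hP0 : (0 : ℝ) < P := by positivity
        rw [show (11 : ℝ) / 6 + 4 * ε = 1 + 3 * ε + ε + 5 / 6 by ring,
          Real.rpow_add hP0 (1 + 3 * ε + ε), Real.rpow_add hP0 (1 + 3 * ε)]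
        ring

end quadSolutions

theorem count_quadruple_solutions_general (A : ℤ) :
    ∀ ε : ℝ, 0 < ε → ∃ C : ℝ, 0 < C ∧ ∀ P : ℕ, 1 ≤ P → ∀ N : ℤ,
      ((Finset.filter
          (fun t : ℤ × ℤ × ℤ × ℤ =>
            t.1 * (t.1 * t.2.1 + t.2.2.1 ^ 2) ≠ 0 ∧
              t.1 * (t.1 * t.2.1 + t.2.2.1 ^ 2) + A * t.2.2.2 ^ 3 = N)
          (Finset.Icc (-(P : ℤ)) P ×ˢ Finset.Icc (-(P : ℤ)) P
            ×ˢ Finset.Icc (-(P : ℤ)) P ×ˢ Finset.Icc (-(P : ℤ)) P)).card : ℝ)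
        ≤ C * (P : ℝ) ^ ((11 : ℝ) / 6 + ε) := by
  intro ε hε
  obtain ⟨C, hC, hτ⟩ := Nat.exists_card_divisors_le_mul_rpow (ε := ε / 4) (by positivity)
  refine ⟨180 * C + 48 * 2 ^ (ε / 4) * C ^ 2, by positivity, fun P hP N => ?_⟩
  have hsmall := card_quadSolutions_filter_natAbs_le (A := A) (N := N) hP (by positivity) hτ
  have hlarge := card_quadSolutions_filter_not_natAbs_le (A := A) (N := N) hP (by positivity) hτ
  rw [show 4 * (ε / 4) = ε by ring] at hlarge
  have hexp : (P : ℝ) ^ ((11 : ℝ) / 6 + ε / 4) ≤ (P : ℝ) ^ ((11 : ℝ) / 6 + ε) :=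
    Real.rpow_le_rpow_of_exponent_le (by exact_mod_cast hP) (by linarith)
  change (#(quadSolutions A N P) : ℝ) ≤ _
  rw [← card_filter_add_card_filter_not fun t => t.1.natAbs ≤ ⌊(P : ℝ) ^ ((1 : ℝ) / 3)⌋₊,
    Nat.cast_add, add_mul]
  have := mul_le_mul_of_nonneg_left hexp (by positivity : (0 : ℝ) ≤ 180 * C)
  linarith

/-- For fixed `A ≠ 0`, uniformly in `N`, the number of quadruples `(x,y,z,w)` in
`[-P,P]⁴` with `x(xy+z²) ≠ 0` and `x(xy+z²) + A w³ = N` is `O(P^(11/6+ε))`. -/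
theorem count_quadruple_solutions (A : ℤ) (hA : A ≠ 0) :
    ∀ ε : ℝ, 0 < ε → ∃ C : ℝ, 0 < C ∧ ∀ P : ℕ, 1 ≤ P → ∀ N : ℤ,
      ((Finset.filter
          (fun t : ℤ × ℤ × ℤ × ℤ =>
            t.1 * (t.1 * t.2.1 + t.2.2.1 ^ 2) ≠ 0 ∧
              t.1 * (t.1 * t.2.1 + t.2.2.1 ^ 2) + A * t.2.2.2 ^ 3 = N)
          (Finset.Icc (-(P : ℤ)) P ×ˢ Finset.Icc (-(P : ℤ)) P
            ×ˢ Finset.Icc (-(P : ℤ)) P ×ˢ Finset.Icc (-(P : ℤ)) P)).card : ℝ)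
        ≤ C * (P : ℝ) ^ ((11 : ℝ) / 6 + ε) :=
  count_quadruple_solutions_general A
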